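/- Let R be a commutative ring, r ≥ 2 and 1 ≤ d ≤ ⌊r/2⌋ integers. Let λ = (λ_1,…,λ_d) ∈ ℕ^d, let s : ℤ → R satisfy s(k) = 0 for all k < 0, and let N ∈ ℕ satisfy N ≥ λ_i + 2d for all i. Then the coefficient of the monomial ∏_{j=1}^{d} t_j^{N+r−1−j} in the polynomial det((t_j^{λ_i+d−i})_{1≤i,j≤d}) · ∏_{1≤i<j≤d}(t_i + t_j) · ∏_{j=1}^{d} Ŝ_N(t_j) equals the determinant of the d×d matrix whose (i,j) entry is s(λ_i − (r − d − i) + 2(j − i)). -/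

import Mathlib

/-!
Expanding the determinant and `V = ∏_{i<j} (t_i + t_j)`, the coefficient becomes
`∑ₑ coeff e V • D(δ + e)` with `δ = (0, 1, …, d - 1)` and `D(u) = det (s (B_i + u_j))`,
`B_i = λ_i + d + 1 - r - i`; the bound `λ_i + 2d ≤ N` makes every monomial of
`det (t_j^{λ_i+d-i}) · V` divide the target monomial, so the truncation of `Ŝ_N` is invisible.

`D` is alternating in `u`, so the functional `P ↦ ∑ₑ coeff e P • D(e)` factors through the
antisymmetrization of `P`: an injective exponent vector has exactly one strictly increasing
rearrangement. By Vandermonde, `t^δ V` and `t^{2δ}` have the same antisymmetrization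
`∏_{i<j} (t_j² - t_i²)`, so the coefficient is `D(2δ)`.
-/

open MvPolynomial Finset

theorem Equiv.Perm.prod_Ioi_comp_of_symm {R : Type*} [CommRing R] {n : ℕ}
    (σ : Equiv.Perm (Fin n)) {g : Fin n → Fin n → R} (hg : ∀ i j, g i j = g j i) :
    ∏ i, ∏ j ∈ Ioi i, g (σ i) (σ j) = ∏ i, ∏ j ∈ Ioi i, g i j := by
  -- `f` is `g` made antisymmetric off the diagonal; the sign it picks up along `σ` is `sign σ`.
  set f : Fin n → Fin n → R :=
    fun i j => (if i < j then g i j else 0) - if j < i then g i j else 0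
  have hf : ∀ i j, f i j = -f j i := by
    intro i j
    simp only [f, hg j i]
    split_ifs <;> simp
  have hfg : ∀ i j, i < j → f i j = g i j := fun i j h => by simp [f, h, h.not_gt]
  have hfσ : ∀ i j, i < j →
      f (σ i) (σ j) = (if σ i < σ j then 1 else -1) * g (σ i) (σ j) := by
    intro i j h
    rcases (σ.injective.ne h.ne).lt_or_gt with h' | h' <;> simp [f, h', h'.not_gt]
  have hsign : ((sign σ : ℤ) : R) = ∏ i, ∏ j ∈ Ioi i, (if σ i < σ j then 1 else -1 : R) := by
    rw [sign_eq_prod_prod_Ioi]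
    push_cast
    simp only [apply_ite, Units.val_one, Units.val_neg, Int.cast_one, Int.cast_neg]
  have hsq : ((sign σ : ℤ) : R) * (sign σ : ℤ) = 1 := by
    rw [← Int.cast_mul, ← Units.val_mul, Int.units_mul_self, Units.val_one, Int.cast_one]
  have key := σ.prod_Ioi_comp_eq_sign_mul_prod hf
  rw [prod_congr rfl fun i _ => prod_congr rfl fun j hj => hfσ i j (mem_Ioi.mp hj),
    prod_congr rfl fun i _ => prod_congr rfl fun j hj => hfg i j (mem_Ioi.mp hj)] at key
  simp only [prod_mul_distrib, ← hsign] at key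
  calc _ = ((sign σ : ℤ) : R) * (sign σ : ℤ) * ∏ i, ∏ j ∈ Ioi i, g (σ i) (σ j) := by
        rw [hsq, one_mul]
    _ = _ := by rw [mul_assoc, key, ← mul_assoc, hsq, one_mul]

theorem Tuple.strictMono_comp_iff_eq_sort {α : Type*} [LinearOrder α] {n : ℕ} {u : Fin n → α}
    (hu : Function.Injective u) (π : Equiv.Perm (Fin n)) :
    StrictMono (u ∘ π) ↔ π = Tuple.sort u := by
  refine ⟨fun h => Equiv.ext fun x => hu (congrFun
    (Tuple.comp_sort_eq_comp_iff_monotone.mpr h.monotone) x), ?_⟩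
  rintro rfl
  exact (Tuple.monotone_sort u).strictMono_of_injective (hu.comp (Tuple.sort u).injective)

namespace MvPolynomial

variable {R : Type*} [CommRing R] {d : ℕ}

theorem prod_X_pow_eq_monomial_equivFunOnFinite {σ : Type*} [Fintype σ] (e : σ → ℕ) :
    ∏ j, (X j : MvPolynomial σ R) ^ e j = monomial (Finsupp.equivFunOnFinite.symm e) 1 := by
  classical
  rw [prod_X_pow]
  congr
  ext
  simp

theorem degreeOf_X_le {σ : Type*} [DecidableEq σ] (i j : σ) :
    degreeOf i (X j : MvPolynomial σ R) ≤ if i = j then 1 else 0 := by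
  rw [degreeOf_def]
  refine (Multiset.count_le_of_le i (degrees_X' j)).trans ?_
  simp [Multiset.count_singleton]

theorem degreeOf_prod_Ioi_X_add_X_le (j : Fin d) :
    degreeOf j (∏ i, ∏ k ∈ Ioi i, (X i + X k) : MvPolynomial (Fin d) R) ≤ d - 1 := by
  calc degreeOf j (∏ i, ∏ k ∈ Ioi i, (X i + X k) : MvPolynomial (Fin d) R)
      ≤ ∑ i, ∑ k ∈ Ioi i, ((if j = i then 1 else 0) + if j = k then 1 else 0) := by
        refine (degreeOf_prod_le _ _ _).trans (sum_le_sum fun i _ => ?_)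
        refine (degreeOf_prod_le _ _ _).trans (sum_le_sum fun k _ => ?_)
        refine (degreeOf_add_le _ _ _).trans (max_le ?_ ?_)
        · exact (degreeOf_X_le _ _).trans (Nat.le_add_right _ _)
        · exact (degreeOf_X_le _ _).trans (Nat.le_add_left _ _)
    _ = #(Ioi j) + #(Iio j) := by simp [sum_add_distrib, sum_boole, filter_gt_eq_Iio]
    _ = d - 1 := by simp; omega

theorem rename_prod_Ioi_X_add_X (π : Equiv.Perm (Fin d)) :
    rename ⇑π (∏ i, ∏ j ∈ Ioi i, (X i + X j) : MvPolynomial (Fin d) R)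
      = ∏ i, ∏ j ∈ Ioi i, (X i + X j) := by
  simp only [map_prod, map_add, rename_X]
  exact π.prod_Ioi_comp_of_symm (g := fun i j => X i + X j) fun i j => add_comm _ _

noncomputable def antisymmetrize : MvPolynomial (Fin d) R →ₗ[R] MvPolynomial (Fin d) R :=
  ∑ π : Equiv.Perm (Fin d), Equiv.Perm.sign π • (rename π).toLinearMap

theorem antisymmetrize_apply (P : MvPolynomial (Fin d) R) :
    antisymmetrize P = ∑ π : Equiv.Perm (Fin d), Equiv.Perm.sign π • rename π P := by
  simp [antisymmetrize]

theorem antisymmetrize_mul_of_rename_eq (P Q : MvPolynomial (Fin d) R)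
    (hQ : ∀ π : Equiv.Perm (Fin d), rename π Q = Q) :
    antisymmetrize (P * Q) = antisymmetrize P * Q := by
  simp only [antisymmetrize_apply, map_mul, hQ, sum_mul, smul_mul_assoc]

theorem antisymmetrize_prod_X_pow (e : Fin d → ℕ) :
    antisymmetrize (∏ j, X j ^ e j : MvPolynomial (Fin d) R)
      = (Matrix.of fun i j => X i ^ e j).det := by
  simp [antisymmetrize_apply, Matrix.det_apply, map_prod]

theorem antisymmetrize_prod_X_pow_mul (k : ℕ) :
    antisymmetrize (∏ j : Fin d, X j ^ (k * (j : ℕ)) : MvPolynomial (Fin d) R)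
      = ∏ i, ∏ j ∈ Ioi i, (X j ^ k - X i ^ k) := by
  rw [antisymmetrize_prod_X_pow]
  simp_rw [pow_mul]
  exact Matrix.det_vandermonde _

theorem antisymmetrize_prod_X_pow_mul_prod_Ioi_X_add_X :
    antisymmetrize ((∏ j : Fin d, X j ^ (j : ℕ)) * ∏ i, ∏ j ∈ Ioi i, (X i + X j) :
      MvPolynomial (Fin d) R) = antisymmetrize (∏ j : Fin d, X j ^ (2 * (j : ℕ))) := by
  have hδ := antisymmetrize_prod_X_pow_mul (R := R) (d := d) 1
  simp only [one_mul, pow_one] at hδ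
  rw [antisymmetrize_mul_of_rename_eq _ _ rename_prod_Ioi_X_add_X, hδ,
    antisymmetrize_prod_X_pow_mul, ← prod_mul_distrib]
  refine prod_congr rfl fun i _ => ?_
  rw [← prod_mul_distrib]
  exact prod_congr rfl fun j _ => by ring

section AlternatingEval

variable {M N : Type*} [AddCommGroup M] [Module R M] [AddCommGroup N] [Module R N]

theorem basisMonomials_constr_monomial {σ : Type*} (g : (σ →₀ ℕ) → N) (u : σ →₀ ℕ) (b : R) :
    (basisMonomials σ R).constr R g (monomial u b) = b • g u := by
  rw [show monomial u b = b • basisMonomials σ R u by simp [smul_monomial], map_smul,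
    Module.Basis.constr_basis]

noncomputable def alternatingEval (f : M [⋀^Fin d]→ₗ[R] N) (v : ℕ → M) :
    MvPolynomial (Fin d) R →ₗ[R] N :=
  (basisMonomials (Fin d) R).constr R fun e => f (v ∘ e)

variable (f : M [⋀^Fin d]→ₗ[R] N) (v : ℕ → M)

theorem alternatingEval_monomial (u : Fin d →₀ ℕ) (b : R) :
    alternatingEval f v (monomial u b) = b • f (v ∘ u) :=
  basisMonomials_constr_monomial _ u b

theorem alternatingEval_monomial_mul (m : Fin d →₀ ℕ) (P : MvPolynomial (Fin d) R) :
    alternatingEval f v (monomial m 1 * P) = ∑ e ∈ P.support, coeff e P • f (v ∘ ⇑(m + e)) := by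
  conv_lhs => rw [P.as_sum, mul_sum]
  simp only [map_sum, monomial_mul, one_mul, alternatingEval_monomial]

theorem sum_sign_smul_ite_strictMono (u : Fin d → ℕ) :
    ∑ π : Equiv.Perm (Fin d), Equiv.Perm.sign π •
      (if StrictMono (u ∘ π) then f (v ∘ u ∘ π) else 0) = f (v ∘ u) := by
  have hterm : ∀ π : Equiv.Perm (Fin d), Equiv.Perm.sign π •
      (if StrictMono (u ∘ π) then f (v ∘ u ∘ π) else 0)
        = if StrictMono (u ∘ π) then f (v ∘ u) else 0 := by
    intro π
    split_ifs
    · rw [← Function.comp_assoc, f.map_perm, smul_smul, Int.units_mul_self, one_smul]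
    · rw [smul_zero]
  rw [sum_congr rfl fun π _ => hterm π]
  by_cases hu : Function.Injective u
  · simp_rw [Tuple.strictMono_comp_iff_eq_sort hu]
    rw [sum_ite_eq']
    simp
  · simp [f.map_eq_zero_of_not_injective _ fun h => hu h.of_comp]

theorem alternatingEval_eq_comp_antisymmetrize :
    alternatingEval f v = ((basisMonomials (Fin d) R).constr R fun e =>
      if StrictMono ⇑e then f (v ∘ e) else 0) ∘ₗ antisymmetrize := by
  refine (basisMonomials (Fin d) R).ext fun u => ?_
  have hcoe : ∀ π : Equiv.Perm (Fin d), ⇑(Finsupp.mapDomain π u) = ⇑u ∘ ⇑π⁻¹ := fun π => by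
    ext j
    simp [Finsupp.mapDomain_equiv_apply]
  simp only [coe_basisMonomials, LinearMap.comp_apply, alternatingEval_monomial, one_smul,
    antisymmetrize_apply, rename_monomial, map_sum, Units.smul_def, map_zsmul,
    basisMonomials_constr_monomial, hcoe]
  rw [← sum_sign_smul_ite_strictMono f v u, ← Equiv.sum_comp (Equiv.inv (Equiv.Perm (Fin d)))]
  refine sum_congr rfl fun π _ => ?_
  simp [Units.smul_def]

theorem alternatingEval_eq_of_antisymmetrize_eq {P Q : MvPolynomial (Fin d) R}
    (h : antisymmetrize P = antisymmetrize Q) :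
    alternatingEval f v P = alternatingEval f v Q := by
  rw [alternatingEval_eq_comp_antisymmetrize, LinearMap.comp_apply, LinearMap.comp_apply, h]

end AlternatingEval

section TruncatedSegre

variable (s : ℤ → R) (N : ℕ)

theorem coeff_prod_sum_range_C_mul_X_pow (hs : ∀ k : ℤ, k < 0 → s k = 0) {ι : Type*} [Fintype ι]
    [DecidableEq ι] (u : ι →₀ ℕ) :
    coeff u (∏ j, ∑ k ∈ range (N + 1), C (s k) * X j ^ (N - k)) = ∏ j, s (N - u j) := by
  have reflect : ∀ j, ∑ k ∈ range (N + 1), C (s k) * X j ^ (N - k)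
      = ∑ n ∈ range (N + 1), C (s (N - n)) * (X j : MvPolynomial ι R) ^ n := by
    intro j
    rw [← sum_range_reflect]
    refine sum_congr rfl fun n hn => ?_
    have hn : n ≤ N := Nat.lt_succ_iff.mp (mem_range.mp hn)
    rw [Nat.add_sub_cancel, Nat.sub_sub_self hn, Nat.cast_sub hn]
  simp_rw [reflect, prod_univ_sum, prod_mul_distrib, ← map_prod,
    prod_X_pow_eq_monomial_equivFunOnFinite, C_mul_monomial, mul_one, coeff_sum, coeff_monomial,
    Equiv.symm_apply_eq]
  rw [sum_ite_eq']
  split_ifs with hu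
  · rfl
  · obtain ⟨j, hj⟩ : ∃ j, N < u j := by simpa [Fintype.mem_piFinset] using hu
    exact (prod_eq_zero (mem_univ j) (hs _ (by omega))).symm

theorem coeff_det_mul_mul_prod_sum_range (hs : ∀ k : ℤ, k < 0 → s k = 0) (a : Fin d → ℕ)
    (c : Fin d →₀ ℕ) (P : MvPolynomial (Fin d) R) (hP : ∀ e ∈ P.support, ∀ i j, a i + e j ≤ c j) :
    coeff c ((Matrix.of fun i j => X j ^ a i).det * P *
        ∏ j, ∑ k ∈ range (N + 1), C (s k) * X j ^ (N - k))
      = ∑ e ∈ P.support, coeff e P * (Matrix.of fun i j => s ((N : ℤ) + a i + e j - c j)).det := by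
  conv_lhs => rw [Matrix.det_apply, P.as_sum]
  simp only [Matrix.of_apply, sum_mul, mul_sum, coeff_sum]
  refine sum_congr rfl fun e he => ?_
  rw [Matrix.det_apply, mul_sum]
  refine sum_congr rfl fun σ _ => ?_
  have hle : Finsupp.equivFunOnFinite.symm (fun i => a (σ i)) + e ≤ c := fun j => hP e he (σ j) j
  rw [prod_X_pow_eq_monomial_equivFunOnFinite, smul_mul_assoc, smul_mul_assoc, coeff_smul,
    monomial_mul, one_mul, coeff_monomial_mul', if_pos hle, coeff_prod_sum_range_C_mul_X_pow s N hs,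
    mul_smul_comm]
  refine congrArg _ (congrArg _ (prod_congr rfl fun j _ => congrArg s ?_))
  have := hle j
  simp only [Finsupp.tsub_apply, Finsupp.add_apply, Finsupp.coe_equivFunOnFinite_symm] at this ⊢
  omega

end TruncatedSegre

end MvPolynomial

theorem stmt_7_general {R : Type*} [CommRing R] (r d : ℕ)
    (hd : d ≤ r / 2)
    (lam : Fin d → ℕ) (s : ℤ → R) (hs : ∀ k : ℤ, k < 0 → s k = 0)
    (N : ℕ) (hN : ∀ i : Fin d, lam i + 2 * d ≤ N) :
    MvPolynomial.coeff
      (Finsupp.equivFunOnFinite.symm fun j : Fin d => N + (r - 1 - ((j : ℕ) + 1)))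
      (Matrix.det (Matrix.of fun i j : Fin d =>
          MvPolynomial.X j ^ (lam i + (d - ((i : ℕ) + 1)))) *
        (∏ i : Fin d, ∏ j ∈ Finset.Ioi i,
          (MvPolynomial.X i + MvPolynomial.X j)) *
        ∏ j : Fin d, ∑ k ∈ Finset.range (N + 1),
          MvPolynomial.C (s k) * MvPolynomial.X j ^ (N - k))
    = Matrix.det (Matrix.of fun i j : Fin d =>
        s ((lam i : ℤ) - ((r : ℤ) - (d : ℤ) - (((i : ℕ) : ℤ) + 1)) +
          2 * (((j : ℕ) : ℤ) - ((i : ℕ) : ℤ)))) := by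
  have hr : ∀ j : Fin d, (j : ℕ) + 2 ≤ r := fun j => by have := j.isLt; omega
  set L := alternatingEval Matrix.detRowAlternating
    fun n (i : Fin d) => s ((lam i : ℤ) + d + 1 - r - (i : ℕ) + n)
  calc _ = L (monomial (Finsupp.equivFunOnFinite.symm fun j : Fin d => (j : ℕ)) 1 *
          ∏ i : Fin d, ∏ j ∈ Ioi i, (X i + X j)) := by
        rw [coeff_det_mul_mul_prod_sum_range s N hs, alternatingEval_monomial_mul]
        · refine sum_congr rfl fun e _ => ?_
          rw [smul_eq_mul, ← Matrix.det_transpose]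
          refine congrArg _ (congrArg Matrix.det (Matrix.ext fun i j => congrArg s ?_))
          simp only [Finsupp.add_apply, Finsupp.coe_equivFunOnFinite_symm]
          have := hr i
          have := j.isLt
          omega
        · intro e he i j
          have := (le_degreeOf_of_mem_support j he).trans (degreeOf_prod_Ioi_X_add_X_le j)
          have := hN i
          simp only [Finsupp.coe_equivFunOnFinite_symm]
          omega
    _ = L (monomial (Finsupp.equivFunOnFinite.symm fun j : Fin d => 2 * (j : ℕ)) 1) :=
        alternatingEval_eq_of_antisymmetrize_eq _ _ <| by
          simpa only [prod_X_pow_eq_monomial_equivFunOnFinite] using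
            antisymmetrize_prod_X_pow_mul_prod_Ioi_X_add_X
    _ = _ := by
        rw [alternatingEval_monomial, one_smul, ← Matrix.det_transpose]
        refine congrArg Matrix.det (Matrix.ext fun i j => congrArg s ?_)
        simp only [Finsupp.coe_equivFunOnFinite_symm]
        omega

/-- Algebraic core of Proposition 5.8 (types B and D Grassmann bundle): the coefficient
of `∏_j t_j^{N+r-1-j}` in `det(t_j^{λ_i+d-i}) ⬝ ∏_{i<j}(t_i + t_j) ⬝ ∏_j Ŝ_N(t_j)`
equals `det(s(λ_i - (r - d - i) + 2(j - i)))`. -/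
theorem stmt_7 {R : Type*} [CommRing R] (r d : ℕ) (hr : 2 ≤ r)
    (hd1 : 1 ≤ d) (hd : d ≤ r / 2)
    (lam : Fin d → ℕ) (s : ℤ → R) (hs : ∀ k : ℤ, k < 0 → s k = 0)
    (N : ℕ) (hN : ∀ i : Fin d, lam i + 2 * d ≤ N) :
    MvPolynomial.coeff
      (Finsupp.equivFunOnFinite.symm fun j : Fin d => N + (r - 1 - ((j : ℕ) + 1)))
      (Matrix.det (Matrix.of fun i j : Fin d =>
          MvPolynomial.X j ^ (lam i + (d - ((i : ℕ) + 1)))) *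
        (∏ i : Fin d, ∏ j ∈ Finset.Ioi i,
          (MvPolynomial.X i + MvPolynomial.X j)) *
        ∏ j : Fin d, ∑ k ∈ Finset.range (N + 1),
          MvPolynomial.C (s k) * MvPolynomial.X j ^ (N - k))
    = Matrix.det (Matrix.of fun i j : Fin d =>
        s ((lam i : ℤ) - ((r : ℤ) - (d : ℤ) - (((i : ℕ) : ℤ) + 1)) +
          2 * (((j : ℕ) : ℤ) - ((i : ℕ) : ℤ)))) :=
  stmt_7_general r d hd lam s hs N hN
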